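/- arXiv:2401.15121 — 4 statements merged into one kernel-verified Lean document; each statement's English description precedes it below -/
import Mathlib

section
/- Sterbenz's lemma: Let x and y be floating-point numbers in F_p (binary floating-point numbers with (p+1)-bit significand and unbounded exponent, together with 0). If 0 ≤ y/2 ≤ x ≤ y, then the real differences x − y and y − x are themselves elements of F_p (so floating-point subtraction of x and y is exact). -/
/-- `F_p`: binary floating-point numbers with `(p+1)`-bit significand and
unbounded exponent, together with `0`: reals of the form `±m·2^e` with
`2^p ≤ m < 2^(p+1)`, `e : ℤ`. -/
def Fp (p : ℕ) : Set ℝ :=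
  {x | x = 0 ∨ ∃ (s : ℤ) (m : ℕ) (e : ℤ), (s = 1 ∨ s = -1) ∧
    2 ^ p ≤ m ∧ m < 2 ^ (p + 1) ∧ x = (s : ℝ) * m * (2 : ℝ) ^ e}

/-- `z` has an even last significand bit (or is zero). -/
def EvenSigFp (p : ℕ) (z : ℝ) : Prop :=
  z = 0 ∨ ∃ (s : ℤ) (m : ℕ) (e : ℤ), (s = 1 ∨ s = -1) ∧
    2 ^ p ≤ m ∧ m < 2 ^ (p + 1) ∧ m % 2 = 0 ∧ z = (s : ℝ) * m * (2 : ℝ) ^ e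

/-- `z` is the round-to-nearest (ties to even) value of `r` in `F_p`. -/
def RoundsTo (p : ℕ) (r z : ℝ) : Prop :=
  z ∈ Fp p ∧ (∀ w ∈ Fp p, |r - z| ≤ |r - w|) ∧
    ((∃ w ∈ Fp p, w ≠ z ∧ |r - w| = |r - z|) → EvenSigFp p z)

/- Write `x = mₓ·2^eₓ` and `y = m_y·2^e_y` with normalised significands. Since `x ≤ y`, the
exponents satisfy `eₓ ≤ e_y`, so `y - x` is an integer multiple `k·2^eₓ`; and `y ≤ 2x` gives
`0 ≤ y - x ≤ x < 2^(p+1)·2^eₓ`, so `|k| < 2^(p+1)` fits into `p + 1` bits. -/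

lemma Nat.exists_pow_le_mul_pow_lt {b p m : ℕ} (hb : 1 < b) (hm : m ≠ 0) (hmp : m < b ^ (p + 1)) :
    ∃ j : ℕ, b ^ p ≤ m * b ^ j ∧ m * b ^ j < b ^ (p + 1) := by
  have hL : Nat.log b m ≤ p := Nat.lt_succ_iff.mp (Nat.log_lt_of_lt_pow hm hmp)
  refine ⟨p - Nat.log b m, ?_, ?_⟩
  · calc b ^ p = b ^ Nat.log b m * b ^ (p - Nat.log b m) := by rw [← pow_add]; congr 1; omega
      _ ≤ m * b ^ (p - Nat.log b m) := Nat.mul_le_mul_right _ (Nat.pow_log_le_self b hm)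
  · calc m * b ^ (p - Nat.log b m) < b ^ (Nat.log b m + 1) * b ^ (p - Nat.log b m) :=
          Nat.mul_lt_mul_of_pos_right (Nat.lt_pow_succ_log_self hb m) (by positivity)
      _ = b ^ (p + 1) := by rw [← pow_add]; congr 1; omega

namespace Fp

variable {p : ℕ}

lemma intCast_mul_two_zpow_mem {k : ℤ} (hk : |k| < 2 ^ (p + 1)) (e : ℤ) :
    (k : ℝ) * 2 ^ e ∈ Fp p := by
  rcases eq_or_ne k 0 with rfl | hk0
  · exact Or.inl (by simp)
  have hnat : k.natAbs < 2 ^ (p + 1) := by zify; exact hk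
  obtain ⟨j, hj, hj'⟩ :=
    Nat.exists_pow_le_mul_pow_lt one_lt_two (Int.natAbs_ne_zero.mpr hk0) hnat
  refine Or.inr ⟨k.sign, k.natAbs * 2 ^ j, e - j, ?_, hj, hj', ?_⟩
  · rcases hk0.lt_or_gt with hneg | hpos
    · exact Or.inr (Int.sign_eq_neg_one_of_neg hneg)
    · exact Or.inl (Int.sign_eq_one_of_pos hpos)
  · have hk : (k : ℝ) = k.sign * k.natAbs := by
      rw [Nat.cast_natAbs, ← Int.cast_mul, Int.sign_mul_abs]
    rw [hk, zpow_sub₀ two_ne_zero, zpow_natCast, Nat.cast_mul, Nat.cast_pow, Nat.cast_ofNat]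
    field_simp

lemma exists_eq_natCast_mul_two_zpow_of_pos {x : ℝ} (hx : x ∈ Fp p) (hpos : 0 < x) :
    ∃ (m : ℕ) (e : ℤ), 2 ^ p ≤ m ∧ m < 2 ^ (p + 1) ∧ x = m * 2 ^ e := by
  obtain rfl | ⟨s, m, e, rfl | rfl, hm, hm', rfl⟩ := hx
  · exact absurd hpos (lt_irrefl 0)
  · exact ⟨m, e, hm, hm', by simp⟩
  · have : 0 ≤ (m : ℝ) * 2 ^ e := by positivity
    simp only [Int.reduceNeg, Int.cast_neg, Int.cast_one, neg_mul, one_mul] at hpos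
    linarith

lemma exponent_le_of_le {mx my : ℕ} {ex ey : ℤ} (hmx : 2 ^ p ≤ mx) (hmy : my < 2 ^ (p + 1))
    (hle : (mx : ℝ) * 2 ^ ex ≤ my * 2 ^ ey) : ex ≤ ey := by
  have hmx' : (2 : ℝ) ^ p ≤ mx := by exact_mod_cast hmx
  have hmy' : (my : ℝ) < 2 ^ (p + 1) := by exact_mod_cast hmy
  have : (2 : ℝ) ^ p * 2 ^ ex < 2 ^ p * 2 ^ (ey + 1) :=
    calc (2 : ℝ) ^ p * 2 ^ ex ≤ mx * 2 ^ ex := by gcongr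
      _ ≤ my * 2 ^ ey := hle
      _ < 2 ^ (p + 1) * 2 ^ ey := by gcongr
      _ = 2 ^ p * 2 ^ (ey + 1) := by rw [zpow_add_one₀ two_ne_zero, pow_succ]; ring
  have := (zpow_lt_zpow_iff_right₀ one_lt_two).mp (lt_of_mul_lt_mul_left this (by positivity))
  omega

end Fp

theorem sterbenz_general (p : ℕ) (x y : ℝ) (hx : x ∈ Fp p) (hy : y ∈ Fp p)
    (h2 : y / 2 ≤ x) (h3 : x ≤ y) :
    x - y ∈ Fp p ∧ y - x ∈ Fp p := by
  obtain rfl | hy0 := (show 0 ≤ y by linarith).eq_or_lt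
  · obtain rfl : x = 0 := by linarith
    exact ⟨Or.inl (sub_zero 0), Or.inl (sub_zero 0)⟩
  obtain ⟨mx, ex, hmx, hmx', rfl⟩ := Fp.exists_eq_natCast_mul_two_zpow_of_pos hx (by linarith)
  obtain ⟨my, ey, -, hmy', rfl⟩ := Fp.exists_eq_natCast_mul_two_zpow_of_pos hy hy0
  obtain ⟨n, rfl⟩ := Int.le.dest (Fp.exponent_le_of_le hmx hmy' h3)
  set k : ℤ := my * 2 ^ n - mx
  have hdiff : (my : ℝ) * 2 ^ (ex + n) - mx * 2 ^ ex = k * 2 ^ ex := by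
    rw [zpow_add₀ two_ne_zero, zpow_natCast]; push_cast [k]; ring
  have hk : |k| < 2 ^ (p + 1) := by
    have hbound : |(k : ℝ)| * 2 ^ ex < 2 ^ (p + 1) * 2 ^ ex :=
      calc |(k : ℝ)| * 2 ^ ex = |(my : ℝ) * 2 ^ (ex + n) - mx * 2 ^ ex| := by
            rw [hdiff, abs_mul, abs_of_pos (a := (2 : ℝ) ^ ex) (zpow_pos two_pos ex)]
        _ ≤ mx * 2 ^ ex := abs_le.mpr ⟨by linarith, by linarith⟩
        _ < 2 ^ (p + 1) * 2 ^ ex := by gcongr; exact_mod_cast hmx'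
    exact_mod_cast lt_of_mul_lt_mul_right hbound (zpow_pos two_pos ex).le
  refine ⟨?_, hdiff ▸ Fp.intCast_mul_two_zpow_mem hk ex⟩
  rw [← neg_sub, hdiff, ← neg_mul, ← Int.cast_neg]
  exact Fp.intCast_mul_two_zpow_mem (by rwa [abs_neg]) ex

/-- Sterbenz's lemma: if `x, y ∈ F_p` and `0 ≤ y/2 ≤ x ≤ y`, then the exact
differences `x - y` and `y - x` again lie in `F_p` (so floating-point
subtraction is exact). -/
theorem sterbenz (p : ℕ) (x y : ℝ) (hx : x ∈ Fp p) (hy : y ∈ Fp p)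
    (h1 : 0 ≤ y / 2) (h2 : y / 2 ≤ x) (h3 : x ≤ y) :
    x - y ∈ Fp p ∧ y - x ∈ Fp p :=
  sterbenz_general p x y hx hy h2 h3
end

section
/- Let x, y ∈ F_p be nonzero with the same sign and with exponents e_x ≤ e_y (where the exponent e_z of a nonzero z ∈ F_p is the unique integer with 2^{e_z} ≤ |z| < 2^{e_z+1}). If μ(x) ≥ e_y − p, where μ(x) = min{ m ∈ ℤ : x·2^{−m} ∈ ℤ }, then x − y ∈ F_p ∪ {0} and y − x ∈ F_p ∪ {0}, i.e., floating-point subtraction of x and y is exact. -/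
lemma neg_mem_Fp {p : ℕ} {x : ℝ} (hx : x ∈ Fp p) : -x ∈ Fp p := by
  rcases hx with rfl | ⟨s, m, e, hs, hm₁, hm₂, rfl⟩
  · exact Or.inl neg_zero
  · refine Or.inr ⟨-s, m, e, hs.symm.imp (by simp [·]) (by simp [·]), hm₁, hm₂, ?_⟩
    push_cast
    ring

/-- The significand `n` is padded with `p - log₂ n` zero bits. -/
lemma natCast_mul_zpow_mem_Fp {p n : ℕ} (t : ℤ) (hn : n < 2 ^ (p + 1)) :
    (n : ℝ) * 2 ^ t ∈ Fp p := by
  rcases Nat.eq_zero_or_pos n with rfl | hn₀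
  · exact Or.inl (by simp)
  set l := Nat.log 2 n
  have hl : l ≤ p := Nat.lt_succ_iff.mp (Nat.log_lt_of_lt_pow hn₀.ne' hn)
  refine Or.inr ⟨1, n * 2 ^ (p - l), t - (p - l : ℕ), Or.inl rfl, ?_, ?_, ?_⟩
  · calc 2 ^ p = 2 ^ l * 2 ^ (p - l) := by rw [← pow_add, Nat.add_sub_cancel' hl]
      _ ≤ n * 2 ^ (p - l) := Nat.mul_le_mul_right _ (Nat.pow_log_le_self 2 hn₀.ne')
  · calc n * 2 ^ (p - l) < 2 ^ (l + 1) * 2 ^ (p - l) :=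
          Nat.mul_lt_mul_of_pos_right (Nat.lt_pow_succ_log_self one_lt_two n) (by positivity)
      _ = 2 ^ (p + 1) := by rw [← pow_add]; congr 1; omega
  · rw [zpow_sub₀ two_ne_zero, zpow_natCast]
    push_cast
    field_simp

lemma intCast_mul_zpow_mem_Fp {p : ℕ} {k : ℤ} (t : ℤ) (hk : k.natAbs < 2 ^ (p + 1)) :
    (k : ℝ) * 2 ^ t ∈ Fp p := by
  obtain ⟨n, rfl | rfl⟩ := Int.eq_nat_or_neg k
  · exact_mod_cast natCast_mul_zpow_mem_Fp t hk
  · simpa using neg_mem_Fp (natCast_mul_zpow_mem_Fp t (by simpa using hk))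

lemma mem_Fp_of_abs_lt {p : ℕ} {z : ℝ} {t : ℤ} (hz : ∃ k : ℤ, z = k * 2 ^ t)
    (hlt : |z| < 2 ^ (t + p + 1)) : z ∈ Fp p := by
  obtain ⟨k, rfl⟩ := hz
  refine intCast_mul_zpow_mem_Fp t ?_
  rw [abs_mul, abs_of_pos (zpow_pos (two_pos : (0 : ℝ) < 2) t),
    show t + p + 1 = ((p + 1 : ℕ) : ℤ) + t by push_cast; ring, zpow_add₀ two_ne_zero,
    zpow_natCast] at hlt
  have hk : |(k : ℝ)| < 2 ^ (p + 1) := lt_of_mul_lt_mul_right hlt (zpow_pos two_pos t).le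
  rw [← Int.cast_abs, Int.abs_eq_natAbs] at hk
  exact_mod_cast hk

lemma exists_intCast_mul_zpow_of_le {x : ℝ} {m n : ℤ} (hx : ∃ k : ℤ, x = k * 2 ^ m)
    (hnm : n ≤ m) : ∃ k : ℤ, x = k * 2 ^ n := by
  obtain ⟨k, rfl⟩ := hx
  refine ⟨k * 2 ^ (m - n).toNat, ?_⟩
  push_cast
  rw [mul_assoc, ← zpow_natCast, ← zpow_add₀ two_ne_zero, Int.toNat_of_nonneg (by omega)]
  ring_nf

lemma exists_intCast_mul_zpow_of_mem_Fp {p : ℕ} {y : ℝ} {e : ℤ} (hy : y ∈ Fp p)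
    (hey : 2 ^ e ≤ |y|) : ∃ k : ℤ, y = k * 2 ^ (e - p) := by
  rcases hy with rfl | ⟨s, m, f, hs, -, hm, rfl⟩
  · exact absurd hey (by simp [zpow_pos])
  have habs : |(s : ℝ) * m * 2 ^ f| < 2 ^ (f + p + 1) := by
    have hs₁ : |(s : ℝ)| = 1 := by rcases hs with rfl | rfl <;> simp
    rw [abs_mul, abs_mul, hs₁, one_mul, Nat.abs_cast, abs_of_pos (zpow_pos two_pos f),
      add_assoc, add_comm, zpow_add₀ two_ne_zero]
    exact mul_lt_mul_of_pos_right (by exact_mod_cast hm) (zpow_pos two_pos f)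
  have hef : e < f + p + 1 := (zpow_lt_zpow_iff_right₀ one_lt_two).mp (hey.trans_lt habs)
  exact exists_intCast_mul_zpow_of_le ⟨s * m, by push_cast; rfl⟩ (by omega)

lemma abs_sub_lt_of_mul_pos {α : Type*} [Ring α] [LinearOrder α] [IsStrictOrderedRing α]
    {x y b : α} (hxy : 0 < x * y) (hx : |x| < b) (hy : |y| < b) :
    |x - y| < b := by
  rcases mul_pos_iff.mp hxy with ⟨hx₀, hy₀⟩ | ⟨hx₀, hy₀⟩
  · rw [abs_of_pos hx₀] at hx
    rw [abs_of_pos hy₀] at hy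
    exact abs_sub_lt_of_nonneg_of_lt hx₀.le hx hy₀.le hy
  · rw [abs_of_neg hx₀] at hx
    rw [abs_of_neg hy₀] at hy
    have := abs_sub_lt_of_nonneg_of_lt (neg_pos.2 hx₀).le hx (neg_pos.2 hy₀).le hy
    rwa [neg_sub_neg, abs_sub_comm] at this

theorem exact_sub_Fp_general (p : ℕ) (x y : ℝ) (hy : y ∈ Fp p)
    (hsign : 0 < x * y)
    (ex ey : ℤ)
    (hex : (2 : ℝ) ^ ex ≤ |x| ∧ |x| < (2 : ℝ) ^ (ex + 1))
    (hey : (2 : ℝ) ^ ey ≤ |y| ∧ |y| < (2 : ℝ) ^ (ey + 1))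
    (hexy : ex ≤ ey)
    (μx : ℤ) (hμ : IsLeast {m : ℤ | ∃ k : ℤ, x = (k : ℝ) * (2 : ℝ) ^ m} μx)
    (h : ey - (p : ℤ) ≤ μx) :
    x - y ∈ Fp p ∧ y - x ∈ Fp p := by
  obtain ⟨kx, hkx⟩ := exists_intCast_mul_zpow_of_le hμ.1 h
  obtain ⟨ky, hky⟩ := exists_intCast_mul_zpow_of_mem_Fp hy hey.1
  have hx : |x| < 2 ^ (ey + 1) := hex.2.trans_le (zpow_le_zpow_right₀ one_le_two (by omega))
  have hsub : x - y ∈ Fp p := by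
    refine mem_Fp_of_abs_lt (t := ey - p) ⟨kx - ky, by rw [hkx, hky]; push_cast; ring⟩ ?_
    rw [sub_add_cancel]
    exact abs_sub_lt_of_mul_pos hsign hx hey.2
  exact ⟨hsub, by simpa using neg_mem_Fp hsub⟩

/-- Exact subtraction in `F_p`: if `x, y ∈ F_p` are nonzero with the same sign,
exponents `e_x ≤ e_y`, and `μ(x) ≥ e_y - p`, then `x - y` and `y - x` lie in
`F_p` (which contains `0`), i.e. floating-point subtraction is exact. -/
theorem exact_sub_Fp (p : ℕ) (x y : ℝ) (hx : x ∈ Fp p) (hy : y ∈ Fp p)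
    (hx0 : x ≠ 0) (hy0 : y ≠ 0) (hsign : 0 < x * y)
    (ex ey : ℤ)
    (hex : (2 : ℝ) ^ ex ≤ |x| ∧ |x| < (2 : ℝ) ^ (ex + 1))
    (hey : (2 : ℝ) ^ ey ≤ |y| ∧ |y| < (2 : ℝ) ^ (ey + 1))
    (hexy : ex ≤ ey)
    (μx : ℤ) (hμ : IsLeast {m : ℤ | ∃ k : ℤ, x = (k : ℝ) * (2 : ℝ) ^ m} μx)
    (h : ey - (p : ℤ) ≤ μx) :
    x - y ∈ Fp p ∧ y - x ∈ Fp p :=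
  exact_sub_Fp_general p x y hy hsign ex ey hex hey hexy μx hμ h
end

section
/- Indicator of a box via a Step network under F_p: for any p ∈ ℕ and d ≤ 2^p, there is a 3-layer Step network architecture of 6d + 2 parameters over F_p such that for all α_1 < β_1, …, α_d < β_d in F_p there is a parameter choice making the network output exactly 1[x ∈ ∏_{i=1}^d [α_i, β_i]] for all x ∈ [0,1]^d ∩ F_p^d, despite all arithmetic being performed as rounded floating-point operations in F_p. -/
/-- A feedforward architecture on `d` inputs: `L` layers, layer widths, and
for each neuron in layer `l+1` (and the output neuron in layer `L`) a set of
indices of the previous layer's neurons (index `width l` denoting the bias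
input `1`) that it is connected to; each connection carries one free
parameter. -/
structure Arch (d : ℕ) where
  L : ℕ
  width : ℕ → ℕ
  input_eq : width 0 = d
  output_eq : width L = 1
  idx : ℕ → ℕ → Finset ℕ
  idx_sub : ∀ l i, idx (l + 1) i ⊆ Finset.range (width l + 1)

/-- Total number of free parameters of an architecture. -/
def Arch.nParams {d : ℕ} (A : Arch d) : ℕ :=
  ∑ l ∈ Finset.range A.L, ∑ i ∈ Finset.range (A.width (l + 1)), (A.idx (l + 1) i).card

/-- Floating-point affine map: each product `w j * v j` is rounded, and the
partial sums are accumulated left-to-right with each partial sum rounded. -/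
noncomputable def fpAff (rnd : ℝ → ℝ) (w v : ℕ → ℝ) (s : List ℕ) : ℝ :=
  s.foldl (fun a j => rnd (a + rnd (w j * v j))) 0

/-- Post-activation values of layer `l` (augmented with the bias value `1` at
index `width l`), computed with rounded floating-point operations. -/
noncomputable def postAct {d : ℕ} (A : Arch d) (σ rnd : ℝ → ℝ)
    (θ : ℕ → ℕ → ℕ → ℝ) (x : ℕ → ℝ) : ℕ → ℕ → ℝ
  | 0 => fun j => if j = A.width 0 then 1 else x j
  | l + 1 => fun j =>
      if j = A.width (l + 1) then 1
      else rnd (σ (fpAff rnd (θ (l + 1) j) (postAct A σ rnd θ x l)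
        ((A.idx (l + 1) j).sort (· ≤ ·))))

/-- Network output: the (pre-activation) affine output of the last layer. -/
noncomputable def evalNet {d : ℕ} (A : Arch d) (σ rnd : ℝ → ℝ)
    (θ : ℕ → ℕ → ℕ → ℝ) (x : ℕ → ℝ) : ℝ :=
  fpAff rnd (θ A.L 0) (postAct A σ rnd θ x (A.L - 1)) ((A.idx A.L 0).sort (· ≤ ·))

/-- The binary threshold activation `Step(t) = 1[t ≥ 0]`. -/
noncomputable def stepAct : ℝ → ℝ := fun t => if 0 ≤ t then 1 else 0


/-!
Hidden neuron `2j` computes `Step(x_j - α_j)` and neuron `2j + 1` computes `Step(β_j - x_j)`.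
Their weights `±1, -α_j, β_j` and the input `x_j` lie in `F_p`, so the only rounding is that
of the final sum, and round-to-nearest preserves signs, so Step sees the exact value. The
second layer adds the `2d` bits and the bias `-2d`: every partial sum is an integer of absolute
value at most `2d ≤ 2^(p+1)`, hence exact, and the total is `≥ 0` iff every test passed.
-/

lemma zero_mem_Fp (p : ℕ) : (0 : ℝ) ∈ Fp p := Or.inl rfl

lemma natCast_mul_two_zpow_mem_Fp {p m : ℕ} (e : ℤ) (hm₁ : 2 ^ p ≤ m) (hm₂ : m < 2 ^ (p + 1)) :
    (m : ℝ) * 2 ^ e ∈ Fp p :=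
  Or.inr ⟨1, m, e, Or.inl rfl, hm₁, hm₂, by push_cast; ring⟩

lemma two_zpow_mem_Fp (p : ℕ) (e : ℤ) : (2 : ℝ) ^ e ∈ Fp p := by
  convert natCast_mul_two_zpow_mem_Fp (e - p) le_rfl (Nat.pow_lt_pow_right one_lt_two p.lt_succ_self)
    using 1
  push_cast
  rw [← zpow_natCast, ← zpow_add₀ two_ne_zero, add_sub_cancel]

lemma natCast_mem_Fp {p n : ℕ} (hn : n ≤ 2 ^ (p + 1)) : (n : ℝ) ∈ Fp p := by
  rcases eq_or_ne n 0 with rfl | hn₀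
  · simpa using zero_mem_Fp p
  rcases hn.eq_or_lt with rfl | hlt
  · exact_mod_cast zpow_natCast (2 : ℝ) (p + 1) ▸ two_zpow_mem_Fp p (p + 1 : ℕ)
  have hlog : Nat.log 2 n ≤ p := Nat.lt_succ_iff.mp (Nat.log_lt_of_lt_pow hn₀ hlt)
  -- `n * 2 ^ k` has exactly `p + 1` bits
  set k := p - Nat.log 2 n
  convert natCast_mul_two_zpow_mem_Fp (m := n * 2 ^ k) (-k) ?_ ?_ using 1
  · push_cast
    rw [zpow_neg, zpow_natCast]
    field_simp
  · calc 2 ^ p = 2 ^ Nat.log 2 n * 2 ^ k := by rw [← pow_add]; congr 1; omega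
      _ ≤ n * 2 ^ k := Nat.mul_le_mul_right _ (Nat.pow_log_le_self 2 hn₀)
  · calc n * 2 ^ k < 2 ^ (Nat.log 2 n + 1) * 2 ^ k :=
          Nat.mul_lt_mul_of_pos_right (Nat.lt_pow_succ_log_self one_lt_two n) (by positivity)
      _ = 2 ^ (p + 1) := by rw [← pow_add]; congr 1; omega

lemma one_mem_Fp (p : ℕ) : (1 : ℝ) ∈ Fp p := by
  exact_mod_cast natCast_mem_Fp (n := 1) Nat.one_le_two_pow

lemma stepAct_mem_Fp (p : ℕ) (t : ℝ) : stepAct t ∈ Fp p := by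
  unfold stepAct
  split
  · exact one_mem_Fp p
  · exact zero_mem_Fp p

section Rounding

variable {p : ℕ} {rnd : ℝ → ℝ} (hr : ∀ r, RoundsTo p r (rnd r))
include hr

lemma rnd_eq_self {r : ℝ} (h : r ∈ Fp p) : rnd r = r := by
  have := (hr r).2.1 r h
  rw [sub_self, abs_zero, abs_nonpos_iff, sub_eq_zero] at this
  exact this.symm

lemma rnd_stepAct (t : ℝ) : rnd (stepAct t) = stepAct t := rnd_eq_self hr (stepAct_mem_Fp p t)

/-- Rounding to nearest preserves the sign: `0` is a candidate for `r ≥ 0`, and for `r < 0`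
so is a power of two `-2^e ∈ [r, 0)`. -/
lemma stepAct_rnd (r : ℝ) : stepAct (rnd r) = stepAct r := by
  suffices 0 ≤ rnd r ↔ 0 ≤ r by simp only [stepAct, this]
  constructor
  · intro hrnd
    by_contra! hneg
    have hpow : (2 : ℝ) ^ Int.log 2 (-r) ≤ -r := Int.zpow_log_le_self one_lt_two (by linarith)
    have hpos : (0 : ℝ) < 2 ^ Int.log 2 (-r) := by positivity
    have := (hr r).2.1 _ (neg_mem_Fp (two_zpow_mem_Fp p (Int.log 2 (-r))))
    rw [abs_of_nonpos (by linarith), abs_of_nonpos (by linarith)] at this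
    linarith
  · intro h
    by_contra! hneg
    have := (hr r).2.1 0 (zero_mem_Fp p)
    rw [sub_zero, abs_of_nonneg h, abs_of_pos (by linarith)] at this
    linarith

variable {w v : ℕ → ℝ}

lemma fpAff_singleton {a : ℕ} (ha : w a * v a ∈ Fp p) : fpAff rnd w v [a] = w a * v a := by
  simp [fpAff, rnd_eq_self hr ha]

lemma fpAff_pair {a b : ℕ} (ha : w a * v a ∈ Fp p) (hb : w b * v b ∈ Fp p) :
    fpAff rnd w v [a, b] = rnd (w a * v a + w b * v b) := by
  simp [fpAff, rnd_eq_self hr ha, rnd_eq_self hr hb]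

lemma fpAff_range {n : ℕ} (hterm : ∀ j < n, w j * v j ∈ Fp p)
    (hpartial : ∀ k ≤ n, ∑ j ∈ Finset.range k, w j * v j ∈ Fp p) :
    fpAff rnd w v (List.range n) = ∑ j ∈ Finset.range n, w j * v j := by
  induction n with
  | zero => rfl
  | succ n ih =>
    have ih := ih (fun j hj => hterm j (by omega)) (fun k hk => hpartial k (by omega))
    simp only [fpAff] at ih ⊢
    rw [List.range_succ, List.foldl_append, ih, List.foldl_cons, List.foldl_nil,
      rnd_eq_self hr (hterm n n.lt_succ_self), ← Finset.sum_range_succ,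
      rnd_eq_self hr (hpartial _ le_rfl)]

end Rounding

section AndGate

open Finset

variable {ι : Type*} (s : Finset ι) (g : ι → ℝ)

open Classical in
lemma sum_stepAct : ∑ i ∈ s, stepAct (g i) = #{i ∈ s | 0 ≤ g i} := sum_boole _ s

lemma sum_stepAct_mem_Fp {p : ℕ} (hs : #s ≤ 2 ^ (p + 1)) : ∑ i ∈ s, stepAct (g i) ∈ Fp p := by
  classical
  rw [sum_stepAct]
  exact natCast_mem_Fp ((card_filter_le _ _).trans hs)

lemma sum_stepAct_sub_card_mem_Fp {p : ℕ} (hs : #s ≤ 2 ^ (p + 1)) :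
    ∑ i ∈ s, stepAct (g i) - #s ∈ Fp p := by
  classical
  rw [sum_stepAct, ← neg_sub, ← Nat.cast_sub (card_filter_le _ _)]
  exact neg_mem_Fp (natCast_mem_Fp (Nat.sub_le_of_le_add (by omega)))

lemma sum_stepAct_sub_card_nonneg_iff : 0 ≤ ∑ i ∈ s, stepAct (g i) - #s ↔ ∀ i ∈ s, 0 ≤ g i := by
  classical
  rw [sum_stepAct, sub_nonneg, Nat.cast_le, (card_filter_le _ _).ge_iff_eq, card_filter_eq_iff]

end AndGate

section BoxNetwork

variable {d : ℕ}

def boxWidth (d : ℕ) : ℕ → ℕ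
  | 0 => d
  | 1 => 2 * d
  | _ => 1

def boxIdx (d : ℕ) : ℕ → ℕ → Finset ℕ
  | 1, i => if i < 2 * d then {i / 2, d} else ∅
  | 2, _ => Finset.range (2 * d + 1)
  | 3, _ => {0}
  | _, _ => ∅

def boxArch (d : ℕ) : Arch d where
  L := 3
  width := boxWidth d
  input_eq := rfl
  output_eq := rfl
  idx := boxIdx d
  idx_sub := by
    rintro (_ | _ | _ | l) i <;> simp only [boxIdx, boxWidth]
    · split_ifs with hi
      · intro j
        simp only [Finset.mem_insert, Finset.mem_singleton, Finset.mem_range]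
        omega
      · exact Finset.empty_subset _
    · exact subset_rfl
    · simp
    · exact Finset.empty_subset _

lemma boxArch_width : (boxArch d).width = boxWidth d := rfl

lemma boxArch_idx : (boxArch d).idx = boxIdx d := rfl

lemma boxArch_nParams (d : ℕ) : (boxArch d).nParams = 6 * d + 2 := by
  have hcard : ∀ i ∈ Finset.range (2 * d), (boxIdx d 1 i).card = 2 := fun i hi => by
    rw [Finset.mem_range] at hi
    rw [boxIdx, if_pos hi, Finset.card_pair (by omega)]
  simp only [Arch.nParams, boxArch, Finset.sum_range_succ, Finset.sum_range_zero, boxWidth]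
  rw [Finset.sum_congr rfl hcard]
  simp [boxIdx]
  ring

-- The bias input of layer `l` sits at index `width l`: `d` in layer 0, `2 * d` in layer 1.
noncomputable def boxParams (d : ℕ) (α β : ℕ → ℝ) : ℕ → ℕ → ℕ → ℝ
  | 1, i, j =>
    if i < 2 * d ∧ j = d then (if i % 2 = 0 then -α (i / 2) else β (i / 2))
    else if i % 2 = 0 then 1 else -1
  | 2, _, j => if j = 2 * d then -(2 * d : ℕ) else 1
  | _, _, _ => 1

lemma boxParams_mem_Fp {p : ℕ} {α β : ℕ → ℝ} (hd : 2 * d ≤ 2 ^ (p + 1))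
    (hαβ : ∀ j < d, α j ∈ Fp p ∧ β j ∈ Fp p) (l i j : ℕ) : boxParams d α β l i j ∈ Fp p := by
  rcases l with _ | _ | _ | l <;> simp only [boxParams]
  · exact one_mem_Fp p
  · split_ifs with hj hi
    · exact neg_mem_Fp (hαβ _ (by omega)).1
    · exact (hαβ _ (by omega)).2
    · exact one_mem_Fp p
    · exact neg_mem_Fp (one_mem_Fp p)
  · split_ifs
    · exact neg_mem_Fp (natCast_mem_Fp hd)
    · exact one_mem_Fp p
  · exact one_mem_Fp p

noncomputable def boxSlack (α β x : ℕ → ℝ) (i : ℕ) : ℝ :=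
  if i % 2 = 0 then x (i / 2) - α (i / 2) else β (i / 2) - x (i / 2)

lemma forall_boxSlack_nonneg_iff {α β x : ℕ → ℝ} :
    (∀ i ∈ Finset.range (2 * d), 0 ≤ boxSlack α β x i) ↔ ∀ j < d, x j ∈ Set.Icc (α j) (β j) := by
  simp only [Finset.mem_range, Set.mem_Icc, boxSlack]
  constructor
  · intro h j hj
    have h₀ := h (2 * j) (by omega)
    have h₁ := h (2 * j + 1) (by omega)
    rw [if_pos (by omega), show 2 * j / 2 = j by omega] at h₀
    rw [if_neg (by omega), show (2 * j + 1) / 2 = j by omega] at h₁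
    exact ⟨by linarith, by linarith⟩
  · intro h i hi
    have := h (i / 2) (by omega)
    split_ifs <;> linarith [this.1, this.2]

end BoxNetwork

section BoxEvaluation

variable {p d : ℕ} {rnd : ℝ → ℝ} (hr : ∀ r, RoundsTo p r (rnd r)) {α β x : ℕ → ℝ}
include hr

lemma postAct_boxArch_one (hαβ : ∀ j < d, α j ∈ Fp p ∧ β j ∈ Fp p) (hx : ∀ j < d, x j ∈ Fp p)
    {i : ℕ} (hi : i < 2 * d) :
    postAct (boxArch d) stepAct rnd (boxParams d α β) x 1 i = stepAct (boxSlack α β x i) := by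
  have hj : i / 2 < d := by omega
  have hsort : (boxIdx d 1 i).sort (· ≤ ·) = [i / 2, d] := by
    rw [boxIdx, if_pos hi, Finset.sort_insert _ (by simp; omega) (by simp; omega),
      Finset.sort_singleton]
  have hinput : boxParams d α β 1 i (i / 2) * (if i / 2 = d then 1 else x (i / 2)) =
      if i % 2 = 0 then x (i / 2) else -x (i / 2) := by
    simp only [boxParams, hj.ne, and_false, if_false]
    split_ifs <;> ring
  have hbias : boxParams d α β 1 i d * (if d = d then 1 else x d) =
      if i % 2 = 0 then -α (i / 2) else β (i / 2) := by
    simp [boxParams, hi]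
  simp only [postAct, boxArch_width, boxArch_idx, boxWidth, zero_add, hsort]
  rw [if_neg (by omega), fpAff_pair hr (by rw [hinput]; split_ifs; exacts [hx _ hj, neg_mem_Fp (hx _ hj)])
    (by rw [hbias]; split_ifs; exacts [neg_mem_Fp (hαβ _ hj).1, (hαβ _ hj).2]),
    stepAct_rnd hr, rnd_stepAct hr, hinput, hbias, boxSlack]
  split_ifs <;> ring_nf

lemma postAct_boxArch_two (hd : 2 * d ≤ 2 ^ (p + 1)) (hαβ : ∀ j < d, α j ∈ Fp p ∧ β j ∈ Fp p)
    (hx : ∀ j < d, x j ∈ Fp p) :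
    postAct (boxArch d) stepAct rnd (boxParams d α β) x 2 0 =
      stepAct (∑ i ∈ Finset.range (2 * d), stepAct (boxSlack α β x i) - (2 * d : ℕ)) := by
  set f := fun j => boxParams d α β 2 0 j * postAct (boxArch d) stepAct rnd (boxParams d α β) x 1 j
  have hterm : ∀ j < 2 * d, f j = stepAct (boxSlack α β x j) := fun j hj => by
    simp only [f, boxParams, if_neg hj.ne, one_mul]
    exact postAct_boxArch_one hr hαβ hx hj
  have hlast : f (2 * d) = -(2 * d : ℕ) := by
    simp [f, boxParams, postAct, boxArch_width, boxWidth]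
  have hpartial : ∀ k ≤ 2 * d,
      ∑ j ∈ Finset.range k, f j = ∑ j ∈ Finset.range k, stepAct (boxSlack α β x j) :=
    fun k hk => Finset.sum_congr rfl fun j hj => hterm j (by rw [Finset.mem_range] at hj; omega)
  have htotal : ∑ j ∈ Finset.range (2 * d + 1), f j =
      ∑ i ∈ Finset.range (2 * d), stepAct (boxSlack α β x i) - (2 * d : ℕ) := by
    rw [Finset.sum_range_succ, hpartial _ le_rfl, hlast, sub_eq_add_neg]
  have hfpAff : fpAff rnd (boxParams d α β 2 0)
      (postAct (boxArch d) stepAct rnd (boxParams d α β) x 1) (List.range (2 * d + 1)) =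
      ∑ j ∈ Finset.range (2 * d + 1), f j := by
    refine fpAff_range hr (fun j hj => ?_) (fun k hk => ?_)
    · rcases (Nat.lt_succ_iff.mp hj).lt_or_eq with hj | rfl
      · change f j ∈ Fp p
        exact (hterm j hj).symm ▸ stepAct_mem_Fp p _
      · change f (2 * d) ∈ Fp p
        exact hlast.symm ▸ neg_mem_Fp (natCast_mem_Fp hd)
    · rcases hk.lt_or_eq with hk | rfl
      · rw [hpartial k (by omega)]
        exact sum_stepAct_mem_Fp _ _ (by simp; omega)
      · rw [htotal]
        simpa using sum_stepAct_sub_card_mem_Fp (Finset.range (2 * d)) (boxSlack α β x) (by simpa)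
  rw [postAct]
  simp only [Nat.reduceAdd, boxArch_width, boxArch_idx, boxWidth, boxIdx, Finset.sort_range,
    zero_ne_one, if_false]
  rw [hfpAff, htotal, rnd_stepAct hr]

lemma evalNet_boxArch (hd : 2 * d ≤ 2 ^ (p + 1)) (hαβ : ∀ j < d, α j ∈ Fp p ∧ β j ∈ Fp p)
    (hx : ∀ j < d, x j ∈ Fp p) :
    evalNet (boxArch d) stepAct rnd (boxParams d α β) x =
      stepAct (∑ i ∈ Finset.range (2 * d), stepAct (boxSlack α β x i) - (2 * d : ℕ)) := by
  have hout : boxParams d α β 3 0 0 * postAct (boxArch d) stepAct rnd (boxParams d α β) x 2 0 =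
      stepAct (∑ i ∈ Finset.range (2 * d), stepAct (boxSlack α β x i) - (2 * d : ℕ)) := by
    rw [show boxParams d α β 3 0 0 = 1 from rfl, one_mul, postAct_boxArch_two hr hd hαβ hx]
  change fpAff rnd (boxParams d α β 3 0) (postAct (boxArch d) stepAct rnd (boxParams d α β) x 2)
    ((boxIdx d 3 0).sort (· ≤ ·)) = _
  rw [boxIdx, Finset.sort_singleton, fpAff_singleton hr (hout ▸ stepAct_mem_Fp p _), hout]

end BoxEvaluation

open Classical in
/-- Indicator of a box via a Step network under `F_p`: for `d ≤ 2^p` there is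
a fixed 3-layer Step-network architecture with `6d + 2` parameters such that
for any `α_i < β_i` in `F_p` some choice of `F_p` parameters makes the network
output exactly `1[x ∈ ∏ᵢ [αᵢ, βᵢ]]` on all `x ∈ [0,1]^d ∩ F_p^d`, with all
arithmetic performed as rounded floating-point operations in `F_p`. -/
theorem box_indicator_step_Fp (p d : ℕ) (hd : d ≤ 2 ^ p) :
    ∃ A : Arch d, A.L = 3 ∧ A.nParams = 6 * d + 2 ∧
      ∀ rnd : ℝ → ℝ, (∀ r, RoundsTo p r (rnd r)) →
        ∀ α β : ℕ → ℝ, (∀ j < d, α j ∈ Fp p ∧ β j ∈ Fp p ∧ α j < β j) →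
          ∃ θ : ℕ → ℕ → ℕ → ℝ, (∀ l i j, θ l i j ∈ Fp p) ∧
            ∀ x : ℕ → ℝ, (∀ j < d, x j ∈ Set.Icc (0 : ℝ) 1 ∧ x j ∈ Fp p) →
              evalNet A stepAct rnd θ x =
                if ∀ j < d, x j ∈ Set.Icc (α j) (β j) then 1 else 0 := by
  refine ⟨boxArch d, rfl, boxArch_nParams d, fun rnd hr α β hαβ => ?_⟩
  have h2d : 2 * d ≤ 2 ^ (p + 1) := by rw [pow_succ]; omega
  have hmem : ∀ j < d, α j ∈ Fp p ∧ β j ∈ Fp p := fun j hj => ⟨(hαβ j hj).1, (hαβ j hj).2.1⟩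
  refine ⟨boxParams d α β, boxParams_mem_Fp h2d hmem, fun x hx => ?_⟩
  have hand := sum_stepAct_sub_card_nonneg_iff (Finset.range (2 * d)) (boxSlack α β x)
  rw [Finset.card_range, forall_boxSlack_nonneg_iff] at hand
  rw [evalNet_boxArch hr h2d hmem fun j hj => (hx j hj).2, stepAct]
  exact if_congr hand rfl rfl
end

section
/- Universal approximation by Step networks under F_p: for any p ∈ ℕ, d ≤ 2^p, continuous f* : [0,1]^d → ℝ, and ε > 0, there exists a 3-layer Step network f over F_p with at most (6d + 2)K^d parameters, where K = min{ k ∈ ℕ : 1/ω_{f*}^{−1}(ε) ≤ k } and ω_{f*}^{−1} is the inverse modulus of continuity, such that |f(x) − f*(x)| ≤ |f*(x) − ⟦f*(x)⟧| + ε for all x ∈ [0,1]^d ∩ F_p^d. -/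
/-- Modulus of continuity of `f` on `[0,1]^d` with respect to the sup norm. -/
noncomputable def modCont (d : ℕ) (f : (Fin d → ℝ) → ℝ) (δ : ℝ) : ℝ :=
  sSup {t | ∃ x x' : Fin d → ℝ, x ∈ Set.Icc 0 1 ∧ x' ∈ Set.Icc 0 1 ∧
    (∀ j, |x j - x' j| ≤ δ) ∧ t = |f x - f x'|}

/-- Inverse modulus of continuity: `ω_f⁻¹(ε) = sup {δ ≥ 0 : ω_f(δ) ≤ ε}`. -/
noncomputable def invMod (d : ℕ) (f : (Fin d → ℝ) → ℝ) (ε : ℝ) : ℝ :=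
  sSup {δ | 0 ≤ δ ∧ modCont d f δ ≤ ε}

open Finset

namespace Fp

variable {p : ℕ}

lemma zero_mem : (0 : ℝ) ∈ Fp p := Or.inl rfl

lemma neg_mem {x : ℝ} (hx : x ∈ Fp p) : -x ∈ Fp p := by
  rcases hx with rfl | ⟨s, m, e, hs, hm₁, hm₂, rfl⟩
  · simpa using zero_mem
  · refine Or.inr ⟨-s, m, e, ?_, hm₁, hm₂, by push_cast; ring⟩
    rcases hs with rfl | rfl <;> norm_num

/-- The significand `n` is normalized to `n * 2^(p - log₂ n)`. -/
lemma natCast_mul_zpow_mem {n : ℕ} (hn : 0 < n) (hn' : n < 2 ^ (p + 1)) (e : ℤ) :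
    (n : ℝ) * 2 ^ e ∈ Fp p := by
  set L := Nat.log 2 n
  have hL : L ≤ p := Nat.lt_succ_iff.1 ((Nat.pow_lt_pow_iff_right (by norm_num)).1
    ((Nat.pow_log_le_self 2 hn.ne').trans_lt hn'))
  have hshift : 2 ^ L * 2 ^ (p - L) = 2 ^ p := by rw [← pow_add, Nat.add_sub_cancel' hL]
  refine Or.inr ⟨1, n * 2 ^ (p - L), e - (p - L : ℕ), Or.inl rfl, ?_, ?_, ?_⟩
  · exact hshift ▸ Nat.mul_le_mul_right _ (Nat.pow_log_le_self 2 hn.ne')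
  · calc n * 2 ^ (p - L) < 2 ^ (L + 1) * 2 ^ (p - L) :=
          Nat.mul_lt_mul_of_pos_right (Nat.lt_pow_succ_log_self one_lt_two n) (by positivity)
      _ = 2 ^ (p + 1) := by rw [pow_succ, mul_right_comm, hshift, pow_succ]
  · rw [zpow_sub₀ two_ne_zero, zpow_natCast]
    push_cast
    field_simp

lemma intCast_mul_zpow_mem {z : ℤ} (hz : |z| ≤ 2 ^ (p + 1)) (e : ℤ) :
    (z : ℝ) * 2 ^ e ∈ Fp p := by
  suffices h : ∀ n : ℕ, n ≤ 2 ^ (p + 1) → (n : ℝ) * 2 ^ e ∈ Fp p by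
    obtain ⟨n, rfl | rfl⟩ := Int.eq_nat_or_neg z <;>
      have hn : n ≤ 2 ^ (p + 1) := by simp at hz; exact_mod_cast hz
    · exact_mod_cast h n hn
    · simpa using neg_mem (h n hn)
  intro n hn
  rcases Nat.eq_zero_or_pos n with rfl | hn0
  · simpa using zero_mem
  rcases hn.lt_or_eq with hn | rfl
  · exact natCast_mul_zpow_mem hn0 hn e
  · have := natCast_mul_zpow_mem (p := p) (n := 2 ^ p) (by positivity)
      (Nat.pow_lt_pow_right one_lt_two p.lt_succ_self) (e + 1)
    convert this using 1
    rw [zpow_add_one₀ two_ne_zero]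
    push_cast
    ring

lemma intCast_mem {z : ℤ} (hz : |z| ≤ 2 ^ (p + 1)) : (z : ℝ) ∈ Fp p := by
  simpa using intCast_mul_zpow_mem hz 0

lemma two_zpow_mem (n : ℤ) : (2 : ℝ) ^ n ∈ Fp p := by
  simpa using intCast_mul_zpow_mem (p := p) (z := 1) (by simp [one_le_pow₀]) n

lemma one_mem : (1 : ℝ) ∈ Fp p := by simpa using two_zpow_mem (p := p) 0

lemma two_mem : (2 : ℝ) ∈ Fp p := by simpa using two_zpow_mem (p := p) 1

lemma exists_eq_intCast_mul_zpow {x : ℝ} (hx : x ∈ Fp p) {n : ℤ} (hxn : 2 ^ n ≤ x) :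
    ∃ q : ℤ, x = q * 2 ^ (n - p) := by
  have h2n : (0 : ℝ) < 2 ^ n := by positivity
  rcases hx with rfl | ⟨s, m, e, hs, -, hm, rfl⟩
  · linarith
  have hs : s = 1 := by
    rcases hs with hs | rfl
    · exact hs
    · push_cast at hxn
      nlinarith [show (0 : ℝ) ≤ m * 2 ^ e by positivity]
  subst hs
  have hen : n - p ≤ e := by
    have : (2 : ℝ) ^ n < 2 ^ (e + (p + 1 : ℕ)) := by
      rw [zpow_add₀ two_ne_zero, zpow_natCast, mul_comm]
      refine hxn.trans_lt ?_
      rw [Int.cast_one, one_mul]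
      exact mul_lt_mul_of_pos_right (by exact_mod_cast hm) (by positivity)
    have := (zpow_lt_zpow_iff_right₀ one_lt_two).1 this
    push_cast at this
    omega
  refine ⟨m * 2 ^ (e - (n - p)).toNat, ?_⟩
  push_cast
  rw [one_mul, mul_assoc, ← zpow_natCast, ← zpow_add₀ two_ne_zero,
    Int.toNat_of_nonneg (by omega), sub_add_cancel]

lemma exists_isLeast_ge {r : ℝ} (hr : 0 < r) : ∃ t, IsLeast {x | x ∈ Fp p ∧ r ≤ x} t := by
  obtain ⟨n, hn, hn'⟩ := exists_mem_Ico_zpow hr one_lt_two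
  have h2e : (0 : ℝ) < 2 ^ (n - p) := by positivity
  set c := ⌈r / 2 ^ (n - p)⌉
  have hc : 0 < c := Int.ceil_pos.2 (by positivity)
  have hc' : c ≤ 2 ^ (p + 1) := by
    refine Int.ceil_le.2 ((div_le_iff₀ h2e).2 ?_)
    rw [Int.cast_pow, Int.cast_ofNat, ← zpow_natCast, ← zpow_add₀ two_ne_zero]
    convert hn'.le using 2
    push_cast
    ring
  refine ⟨c * 2 ^ (n - p), ⟨intCast_mul_zpow_mem (by rwa [abs_of_pos hc]) _, ?_⟩, ?_⟩
  · exact (div_le_iff₀ h2e).1 (Int.le_ceil _)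
  · rintro x ⟨hx, hrx⟩
    obtain ⟨q, rfl⟩ := exists_eq_intCast_mul_zpow hx (hn.trans hrx)
    refine mul_le_mul_of_nonneg_right ?_ h2e.le
    exact_mod_cast Int.ceil_le.2 ((div_le_iff₀ h2e).2 hrx)

noncomputable def ceil (p : ℕ) (r : ℝ) : ℝ := sInf {x | x ∈ Fp p ∧ r ≤ x}

lemma isLeast_ceil {r : ℝ} (hr : 0 ≤ r) : IsLeast {x | x ∈ Fp p ∧ r ≤ x} (ceil p r) := by
  obtain ⟨t, ht⟩ : ∃ t, IsLeast {x | x ∈ Fp p ∧ r ≤ x} t := by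
    rcases hr.lt_or_eq with hr | rfl
    · exact exists_isLeast_ge hr
    · exact ⟨0, ⟨zero_mem, le_rfl⟩, fun x hx => hx.2⟩
  rwa [ceil, ht.csInf_eq]

lemma ceil_mem {r : ℝ} (hr : 0 ≤ r) : ceil p r ∈ Fp p := (isLeast_ceil hr).1.1

lemma ceil_le_iff {r x : ℝ} (hr : 0 ≤ r) (hx : x ∈ Fp p) : ceil p r ≤ x ↔ r ≤ x :=
  ⟨fun h => (isLeast_ceil hr).1.2.trans h, fun h => (isLeast_ceil hr).2 ⟨hx, h⟩⟩

end Fp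

/-- Round-to-nearest into `Fp p`, without the ties-to-even clause of `RoundsTo`. -/
def IsNearestRounding (p : ℕ) (rnd : ℝ → ℝ) : Prop :=
  ∀ r, ∀ w ∈ Fp p, |r - rnd r| ≤ |r - w|

namespace IsNearestRounding

variable {p : ℕ} {rnd : ℝ → ℝ}

lemma apply_eq_self (h : IsNearestRounding p rnd) {r : ℝ} (hr : r ∈ Fp p) : rnd r = r := by
  have := h r r hr
  rw [sub_self, abs_zero, abs_nonpos_iff, sub_eq_zero] at this
  exact this.symm

lemma apply_intCast (h : IsNearestRounding p rnd) {z : ℤ} (hz : |z| ≤ 2 ^ (p + 1)) :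
    rnd z = z :=
  h.apply_eq_self (Fp.intCast_mem hz)

lemma apply_stepAct (h : IsNearestRounding p rnd) (r : ℝ) : rnd (stepAct r) = stepAct r := by
  unfold stepAct
  split_ifs
  exacts [h.apply_eq_self Fp.one_mem, h.apply_eq_self Fp.zero_mem]

/-- `r` is within `|r| - 2^n` of the float `±2^n`, where `2^n ≤ |r| < 2^(n+1)`. -/
lemma abs_sub_apply_lt (h : IsNearestRounding p rnd) {r : ℝ} (hr : r ≠ 0) :
    |r - rnd r| < |r| := by
  obtain ⟨n, hn, -⟩ := exists_mem_Ico_zpow (abs_pos.2 hr) one_lt_two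
  have h2n : (0 : ℝ) < 2 ^ n := by positivity
  have hw : |r - rnd r| ≤ |r| - 2 ^ n := by
    rcases abs_choice r with hr' | hr'
    · calc _ ≤ |r - 2 ^ n| := h r _ (Fp.two_zpow_mem n)
        _ = |r| - 2 ^ n := by rw [abs_of_nonneg (by linarith), hr']
    · calc _ ≤ |r - -2 ^ n| := h r _ (Fp.neg_mem (Fp.two_zpow_mem n))
        _ = |r| - 2 ^ n := by rw [abs_of_nonpos (by linarith), hr']; ring
  linarith

lemma nonneg_iff (h : IsNearestRounding p rnd) (r : ℝ) : 0 ≤ rnd r ↔ 0 ≤ r := by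
  rcases eq_or_ne r 0 with rfl | hr
  · simp [h.apply_eq_self Fp.zero_mem]
  · have := abs_lt.1 (h.abs_sub_apply_lt hr)
    rcases abs_choice r with hr' | hr' <;> constructor <;> intro <;> linarith

lemma stepAct_apply (h : IsNearestRounding p rnd) (r : ℝ) : stepAct (rnd r) = stepAct r := by
  simp only [stepAct, h.nonneg_iff]

variable {w v : ℕ → ℝ}

/-- The accumulator stays the integer `P - Q`, where `P` and `Q` collect the positive and negative
parts of the terms so far; as both stay below `2^(p+1)`, every rounding is exact. -/
lemma foldl_eq_intCast_sum (h : IsNearestRounding p rnd) {g : ℕ → ℤ} :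
    ∀ (s : List ℕ) (P Q : ℤ), 0 ≤ P → 0 ≤ Q → (∀ j ∈ s, w j * v j = g j) →
      P + (s.map fun j => (g j)⁺).sum ≤ 2 ^ (p + 1) →
      Q + (s.map fun j => (g j)⁻).sum ≤ 2 ^ (p + 1) →
      s.foldl (fun a j => rnd (a + rnd (w j * v j))) ((P - Q : ℤ) : ℝ) =
        ((P - Q + (s.map g).sum : ℤ) : ℝ)
  | [], _, _, _, _, _, _, _ => by simp
  | j :: s, P, Q, hP, hQ, hg, hPs, hQs => by
    have hs₀ : 0 ≤ (s.map fun j => (g j)⁺).sum := List.sum_nonneg (by simp [posPart_nonneg])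
    have hs₁ : 0 ≤ (s.map fun j => (g j)⁻).sum := List.sum_nonneg (by simp [negPart_nonneg])
    simp only [List.map_cons, List.sum_cons] at hPs hQs ⊢
    have hgj := posPart_sub_negPart (g j)
    have hj₀ := posPart_nonneg (g j)
    have hj₁ := negPart_nonneg (g j)
    have hstep : rnd (((P - Q : ℤ) : ℝ) + rnd (w j * v j)) =
        ((P + (g j)⁺ - (Q + (g j)⁻) : ℤ) : ℝ) := by
      rw [hg j (by simp), h.apply_intCast (abs_le.2 ⟨by omega, by omega⟩), ← Int.cast_add,
        h.apply_intCast (abs_le.2 ⟨by omega, by omega⟩)]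
      congr 1
      omega
    rw [List.foldl_cons, hstep, foldl_eq_intCast_sum h s _ _ (by omega) (by omega)
      (fun i hi => hg i (by simp [hi])) (by omega) (by omega)]
    congr 1
    omega

lemma fpAff_sort_eq_intCast_sum (h : IsNearestRounding p rnd) {g : ℕ → ℤ} {S : Finset ℕ}
    (hg : ∀ j ∈ S, w j * v j = g j) (hpos : ∑ j ∈ S, (g j)⁺ ≤ 2 ^ (p + 1))
    (hneg : ∑ j ∈ S, (g j)⁻ ≤ 2 ^ (p + 1)) :
    fpAff rnd w v (S.sort (· ≤ ·)) = ((∑ j ∈ S, g j : ℤ) : ℝ) := by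
  have hsum (G : ℕ → ℤ) : ((S.sort (· ≤ ·)).map G).sum = ∑ j ∈ S, G j := by
    rw [Finset.sum_eq_multiset_sum, ← Finset.sort_eq S (· ≤ ·), Multiset.map_coe,
      Multiset.sum_coe]
  have := h.foldl_eq_intCast_sum (S.sort (· ≤ ·)) 0 0 le_rfl le_rfl
    (fun j hj => hg j ((Finset.mem_sort _).1 hj)) (by rwa [hsum, zero_add])
    (by rwa [hsum, zero_add])
  rw [sub_self, zero_add, hsum, Int.cast_zero] at this
  exact this

lemma foldl_eq_self (h : IsNearestRounding p rnd) {a : ℝ} (ha : a ∈ Fp p) :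
    ∀ s : List ℕ, (∀ j ∈ s, w j * v j = 0) →
      s.foldl (fun a j => rnd (a + rnd (w j * v j))) a = a
  | [], _ => rfl
  | j :: s, hs => by
    rw [List.foldl_cons, hs j (by simp), h.apply_eq_self Fp.zero_mem, add_zero,
      h.apply_eq_self ha, foldl_eq_self h ha s (fun i hi => hs i (by simp [hi]))]

lemma fpAff_sort_eq_of_single (h : IsNearestRounding p rnd) {S : Finset ℕ} {i : ℕ}
    (hi : i ∈ S) (hzero : ∀ j ∈ S, j ≠ i → w j * v j = 0) (hmem : w i * v i ∈ Fp p) :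
    fpAff rnd w v (S.sort (· ≤ ·)) = w i * v i := by
  obtain ⟨l₁, l₂, hl⟩ := List.append_of_mem ((Finset.mem_sort (· ≤ ·)).2 hi)
  have hnd := hl ▸ S.sort_nodup (· ≤ ·)
  have hzero' : ∀ j ∈ l₁ ++ i :: l₂, j ≠ i → w j * v j = 0 := fun j hj =>
    hzero j ((Finset.mem_sort (· ≤ ·)).1 (hl ▸ hj))
  rw [fpAff, hl, List.foldl_append, List.foldl_cons,
    h.foldl_eq_self Fp.zero_mem l₁ (fun j hj => hzero' j (by simp [hj]) ?_), zero_add,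
    h.apply_eq_self hmem, h.apply_eq_self hmem,
    h.foldl_eq_self hmem l₂ (fun j hj => hzero' j (by simp [hj]) ?_)]
  · rintro rfl
    exact (List.nodup_cons.1 (List.nodup_append.1 hnd).2.1).1 hj
  · rintro rfl
    exact (List.nodup_append.1 hnd).2.2 _ hj _ (by simp) rfl

lemma abs_apply_sub_le (h : IsNearestRounding p rnd)
    (hmem : ∀ r, rnd r ∈ Fp p) {m a ε : ℝ} (hma : |m - a| ≤ ε / 2) :
    |rnd m - a| ≤ |a - rnd a| + ε := by
  calc |rnd m - a| ≤ |m - rnd m| + |m - a| := by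
        rw [abs_sub_comm m]; exact abs_sub_le _ _ _
    _ ≤ |m - rnd a| + |m - a| := add_le_add_left (h m _ (hmem a)) _
    _ ≤ (|m - a| + |a - rnd a|) + |m - a| := add_le_add_left (abs_sub_le _ _ _) _
    _ ≤ |a - rnd a| + ε := by linarith

end IsNearestRounding

def baseDigit (K c j : ℕ) : ℕ := c / K ^ j % K

lemma baseDigit_lt {K : ℕ} (hK : 0 < K) (c j : ℕ) : baseDigit K c j < K := Nat.mod_lt _ hK

lemma eq_sum_iff_baseDigit_eq {K d c : ℕ} (hc : c < K ^ d) (δ : Fin d → ℕ)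
    (hδ : ∀ j, δ j < K) :
    c = ∑ j : Fin d, δ j * K ^ (j : ℕ) ↔ ∀ j : Fin d, baseDigit K c j = δ j := by
  let δ' : Fin d → Fin K := fun j => ⟨δ j, hδ j⟩
  calc c = ∑ j : Fin d, δ j * K ^ (j : ℕ)
        ↔ (⟨c, hc⟩ : Fin (K ^ d)) = finFunctionFinEquiv δ' := by
        rw [Fin.ext_iff, finFunctionFinEquiv_apply]
    _ ↔ finFunctionFinEquiv.symm ⟨c, hc⟩ = δ' := Equiv.symm_apply_eq _ |>.symm
    _ ↔ ∀ j : Fin d, baseDigit K c j = δ j := by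
        simp only [funext_iff, Fin.ext_iff, finFunctionFinEquiv_symm_apply_val, baseDigit, δ']

lemma sum_mul_pow_lt {K d : ℕ} (δ : Fin d → ℕ) (hδ : ∀ j, δ j < K) :
    ∑ j : Fin d, δ j * K ^ (j : ℕ) < K ^ d :=
  (finFunctionFinEquiv fun j => (⟨δ j, hδ j⟩ : Fin K)).is_lt

/-- `x ∈ [k/K, (k+1)/K]` for `k = gridIndex K x`; the cap `K - 1` puts `x = 1` into the last
interval. -/
noncomputable def gridIndex (K : ℕ) (x : ℝ) : ℕ := min ⌊x * K⌋₊ (K - 1)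

lemma gridIndex_lt {K : ℕ} (hK : 0 < K) (x : ℝ) : gridIndex K x < K :=
  (min_le_right _ _).trans_lt (by omega)

lemma mem_Icc_gridIndex {K : ℕ} (hK : 0 < K) {x : ℝ} (hx : x ∈ Set.Icc (0 : ℝ) 1) :
    x ∈ Set.Icc ((gridIndex K x : ℝ) / K) ((gridIndex K x + 1) / K) := by
  have hK' : (0 : ℝ) < K := by exact_mod_cast hK
  rw [Set.mem_Icc, div_le_iff₀ hK', le_div_iff₀ hK']
  constructor
  · exact (Nat.cast_le.2 (min_le_left _ _)).trans (Nat.floor_le (by nlinarith [hx.1]))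
  · rcases le_total ⌊x * K⌋₊ (K - 1) with h | h
    · rw [gridIndex, min_eq_left h]
      exact (Nat.lt_floor_add_one _).le
    · rw [gridIndex, min_eq_right h, Nat.cast_sub hK, Nat.cast_one, sub_add_cancel]
      nlinarith [hx.2]

lemma eq_gridIndex_iff {K k : ℕ} (hk : k < K) {x : ℝ} (hx : 0 ≤ x) :
    k = gridIndex K x ↔
      (k : ℝ) / K ≤ x ∧ ¬ (k + 1 < K ∧ ((k + 1 : ℕ) : ℝ) / K ≤ x) := by
  have hK' : (0 : ℝ) < K := by exact_mod_cast hk.pos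
  simp only [div_le_iff₀ hK', ← Nat.le_floor_iff (by positivity : 0 ≤ x * K), gridIndex]
  omega

/-- `2` exceeds every input, so the layer-1 units with `k = K` never fire. -/
noncomputable def threshold (p K k : ℕ) : ℝ := if k < K then Fp.ceil p (k / K) else 2

lemma threshold_mem (p K k : ℕ) : threshold p K k ∈ Fp p := by
  unfold threshold
  split_ifs
  exacts [Fp.ceil_mem (by positivity), Fp.two_mem]

lemma threshold_le_iff {p K k : ℕ} {x : ℝ} (hx : x ∈ Fp p) (hx₁ : x ≤ 1) :
    threshold p K k ≤ x ↔ k < K ∧ (k : ℝ) / K ≤ x := by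
  unfold threshold
  split_ifs with hk
  · simp [hk, Fp.ceil_le_iff (r := (k : ℝ) / K) (by positivity) hx]
  · simp only [hk, false_and, iff_false, not_le]
    linarith

lemma ite_threshold_le_sub_ite_threshold_le {p K k : ℕ} (hk : k < K) {x : ℝ} (hx : x ∈ Fp p)
    (hx₀ : 0 ≤ x) (hx₁ : x ≤ 1) :
    ((if threshold p K k ≤ x then 1 else 0) -
        if threshold p K (k + 1) ≤ x then 1 else 0 : ℤ) =
      if k = gridIndex K x then 1 else 0 := by
  simp only [threshold_le_iff hx hx₁, eq_gridIndex_iff hk hx₀, hk, true_and]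
  have hmono : ((k + 1 : ℕ) : ℝ) / K ≤ x → (k : ℝ) / K ≤ x :=
    le_trans (by gcongr; omega)
  by_cases hhi : k + 1 < K ∧ ((k + 1 : ℕ) : ℝ) / K ≤ x
  · rw [if_pos (hmono hhi.2), if_pos hhi, if_neg fun h => h.2 hhi, sub_self]
  · rw [if_neg hhi, sub_zero]
    exact if_congr (and_iff_left hhi).symm rfl rfl

section GridCell

variable {d K : ℕ}

noncomputable def cellIndex (K : ℕ) (x : Fin d → ℝ) : ℕ :=
  ∑ j : Fin d, gridIndex K (x j) * K ^ (j : ℕ)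

lemma cellIndex_lt (hK : 0 < K) (x : Fin d → ℝ) : cellIndex K x < K ^ d :=
  sum_mul_pow_lt _ fun j => gridIndex_lt hK (x j)

def gridCell (K c : ℕ) : Set (Fin d → ℝ) :=
  {y | y ∈ Set.Icc 0 1 ∧
    ∀ j : Fin d, y j ∈ Set.Icc ((baseDigit K c j : ℝ) / K) ((baseDigit K c j + 1) / K)}

lemma mem_gridCell_cellIndex (hK : 0 < K) {x : Fin d → ℝ} (hx : x ∈ Set.Icc 0 1) :
    x ∈ gridCell K (cellIndex K x) := by
  refine ⟨hx, fun j => ?_⟩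
  rw [(eq_sum_iff_baseDigit_eq (cellIndex_lt hK x) _ fun j => gridIndex_lt hK _).1 rfl j]
  exact mem_Icc_gridIndex hK ⟨hx.1 j, hx.2 j⟩

lemma dist_le_of_mem_gridCell (hK : 0 < K) {c : ℕ} {y z : Fin d → ℝ} (hy : y ∈ gridCell K c)
    (hz : z ∈ gridCell K c) : dist y z ≤ 1 / K := by
  refine (dist_pi_le_iff (by positivity)).2 fun j => ?_
  convert Real.dist_le_of_mem_Icc (hy.2 j) (hz.2 j) using 1
  ring

end GridCell

section ModulusOfContinuity

variable {d : ℕ} {f : (Fin d → ℝ) → ℝ}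

lemma abs_sub_le_modCont (hf : ContinuousOn f (Set.Icc 0 1)) {x x' : Fin d → ℝ} {δ : ℝ}
    (hx : x ∈ Set.Icc 0 1) (hx' : x' ∈ Set.Icc 0 1) (hxx' : ∀ j, |x j - x' j| ≤ δ) :
    |f x - f x'| ≤ modCont d f δ := by
  obtain ⟨C, hC⟩ := isCompact_Icc.exists_bound_of_continuousOn hf
  refine le_csSup ⟨C + C, ?_⟩ ⟨x, x', hx, hx', hxx', rfl⟩
  rintro _ ⟨y, y', hy, hy', -, rfl⟩
  exact (abs_sub _ _).trans (add_le_add (hC y hy) (hC y' hy'))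

lemma exists_pos_modCont_le (hf : ContinuousOn f (Set.Icc 0 1)) {ε : ℝ} (hε : 0 < ε) :
    ∃ δ > 0, modCont d f δ ≤ ε := by
  obtain ⟨δ, hδ, hfδ⟩ := Metric.uniformContinuousOn_iff.1
    (isCompact_Icc.uniformContinuousOn_of_continuous hf) ε hε
  refine ⟨δ / 2, half_pos hδ, Real.sSup_le ?_ hε.le⟩
  rintro _ ⟨x, x', hx, hx', hxx', rfl⟩
  have hdist : dist x x' ≤ δ / 2 :=
    (dist_pi_le_iff (half_pos hδ).le).2 fun j => by rw [Real.dist_eq]; exact hxx' j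
  exact (hfδ x hx x' hx' (hdist.trans_lt (half_lt_self hδ))).le

/-- If `{δ | ω_f(δ) ≤ ε}` is unbounded, `invMod` is the junk value `0` and every `δ` qualifies;
otherwise `1 / k ≤ ω_f⁻¹(ε)`. -/
lemma exists_lt_modCont_le (hf : ContinuousOn f (Set.Icc 0 1)) {ε k : ℝ} (hε : 0 < ε)
    (hk : 0 < k) (hkε : 1 / invMod d f ε ≤ k) {D : ℝ} (hD : D < 1 / k) :
    ∃ δ, D < δ ∧ modCont d f δ ≤ ε := by
  by_cases hb : BddAbove {δ | 0 ≤ δ ∧ modCont d f δ ≤ ε}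
  · obtain ⟨δ₀, hδ₀, hδ₀ε⟩ := exists_pos_modCont_le hf hε
    have hinv : 0 < invMod d f ε := hδ₀.trans_le (le_csSup hb ⟨hδ₀.le, hδ₀ε⟩)
    obtain ⟨δ, ⟨-, hδε⟩, hDδ⟩ := exists_lt_of_lt_csSup
      (s := {δ | 0 ≤ δ ∧ modCont d f δ ≤ ε}) ⟨δ₀, hδ₀.le, hδ₀ε⟩
      (hD.trans_le ((one_div_le hinv hk).1 hkε))
    exact ⟨δ, hDδ, hδε⟩
  · obtain ⟨δ, ⟨-, hδε⟩, hDδ⟩ := not_bddAbove_iff.1 hb D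
    exact ⟨δ, hDδ, hδε⟩

lemma abs_sub_le_of_dist_lt (hf : ContinuousOn f (Set.Icc 0 1)) {ε k : ℝ} (hε : 0 < ε)
    (hk : 0 < k) (hkε : 1 / invMod d f ε ≤ k) {y z : Fin d → ℝ} (hy : y ∈ Set.Icc 0 1)
    (hz : z ∈ Set.Icc 0 1) (hyz : dist y z < 1 / k) : |f y - f z| ≤ ε := by
  obtain ⟨δ, hδ, hδε⟩ := exists_lt_modCont_le hf hε hk hkε hyz
  refine (abs_sub_le_modCont hf hy hz fun j => ?_).trans hδε
  exact (dist_le_pi_dist y z j).trans hδ.le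

end ModulusOfContinuity

/-- Approach `z` along the segment from `y`, on which the strict bound applies. -/
lemma ContinuousOn.abs_sub_le_of_dist_le {E : Type*} [NormedAddCommGroup E] [NormedSpace ℝ E]
    {s : Set E} (hs : Convex ℝ s) {f : E → ℝ} (hf : ContinuousOn f s) {ρ ε : ℝ}
    (hρ : 0 < ρ) (h : ∀ y ∈ s, ∀ z ∈ s, dist y z < ρ → |f y - f z| ≤ ε) {y z : E}
    (hy : y ∈ s) (hz : z ∈ s) (hyz : dist y z ≤ ρ) : |f y - f z| ≤ ε := by
  set g : ℝ → E := fun θ => y + θ • (z - y)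
  have hg : ∀ θ ∈ Set.Ioo (0 : ℝ) 1, g θ ∈ s ∧ dist y (g θ) < ρ := fun θ hθ => by
    refine ⟨hs.add_smul_sub_mem hy hz ⟨hθ.1.le, hθ.2.le⟩, ?_⟩
    rw [dist_eq_norm, sub_add_cancel_left, norm_neg, norm_smul, Real.norm_of_nonneg hθ.1.le,
      ← dist_eq_norm, dist_comm]
    calc θ * dist y z ≤ θ * ρ := mul_le_mul_of_nonneg_left hyz hθ.1.le
      _ < ρ := mul_lt_of_lt_one_left hρ hθ.2
  have hgz : Filter.Tendsto g (nhdsWithin 1 (Set.Iio 1)) (nhdsWithin z s) := by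
    refine tendsto_nhdsWithin_iff.2 ⟨?_, ?_⟩
    · have : Continuous g := by fun_prop
      simpa [g] using (this.tendsto 1).mono_left nhdsWithin_le_nhds
    · filter_upwards [Ioo_mem_nhdsLT (zero_lt_one' ℝ)] with θ hθ using (hg θ hθ).1
  refine le_of_tendsto ((tendsto_const_nhds.sub ((hf z hz).tendsto.comp hgz)).abs) ?_
  filter_upwards [Ioo_mem_nhdsLT (zero_lt_one' ℝ)] with θ hθ
  exact h y hy _ (hg θ hθ).1 (hg θ hθ).2

lemma abs_midpoint_sub_le {S : Set ℝ} {ε : ℝ} (h : ∀ a ∈ S, ∀ b ∈ S, a - b ≤ ε)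
    {a : ℝ} (ha : a ∈ S) : |(sInf S + sSup S) / 2 - a| ≤ ε / 2 := by
  have hbdd : BddAbove S := ⟨a + ε, fun b hb => by linarith [h b hb a ha]⟩
  have hbdd' : BddBelow S := ⟨a - ε, fun b hb => by linarith [h a ha b hb]⟩
  have hdiam : sSup S ≤ sInf S + ε := csSup_le ⟨a, ha⟩ fun b hb => by
    linarith [le_csInf ⟨a, ha⟩ fun c hc => (by linarith [h b hb c hc] : b - ε ≤ c)]
  rw [abs_le]
  constructor <;> linarith [csInf_le hbdd' ha, le_csSup hbdd ha]

lemma abs_sub_le_of_mem_gridCell {d K : ℕ} {f : (Fin d → ℝ) → ℝ}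
    (hf : ContinuousOn f (Set.Icc 0 1)) {ε : ℝ} (hε : 0 < ε) (hK : 0 < K)
    (hKε : 1 / invMod d f ε ≤ K) {c : ℕ} {y z : Fin d → ℝ}
    (hy : y ∈ gridCell K c) (hz : z ∈ gridCell K c) : |f y - f z| ≤ ε := by
  have hK' : (0 : ℝ) < K := by exact_mod_cast hK
  exact hf.abs_sub_le_of_dist_le (convex_Icc 0 1) (one_div_pos.2 hK')
    (fun y hy z hz => abs_sub_le_of_dist_lt hf hε hK' hKε hy hz) hy.1 hz.1
    (dist_le_of_mem_gridCell hK hy hz)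

section GridNetwork

variable {d K : ℕ}

lemma mul_add_div_of_lt {j k n : ℕ} (hk : k < n) : (j * n + k) / n = j := by
  rw [mul_comm, Nat.mul_add_div (by omega), Nat.div_eq_of_lt hk, add_zero]

/-- Layer-1 unit `j * (K + 1) + k` (`j < d`, `k ≤ K`) tests `x_j ≥ k/K`; layer-2 unit `c < K^d`
tests whether `x` lies in the grid cell whose base-`K` digits are those of `c`. -/
def gridWidth (d K : ℕ) : ℕ → ℕ
  | 0 => d
  | 1 => d * (K + 1)
  | 2 => K ^ d
  | _ => 1

def cellBlock (K c j : ℕ) : Finset ℕ :=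
  {j * (K + 1) + baseDigit K c j, j * (K + 1) + baseDigit K c j + 1}

def cellInputs (d K c : ℕ) : Finset ℕ :=
  insert (d * (K + 1)) ((range d).biUnion (cellBlock K c))

def gridIdx (d K : ℕ) : ℕ → ℕ → Finset ℕ
  | 1, i => if i < d * (K + 1) then {i / (K + 1), d} else ∅
  | 2, c => cellInputs d K c
  | 3, _ => range (K ^ d)
  | _, _ => ∅

lemma div_eq_and_lt_of_mem_cellBlock (hK : 0 < K) {c j i : ℕ} (hj : j < d)
    (hi : i ∈ cellBlock K c j) : i / (K + 1) = j ∧ i < d * (K + 1) := by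
  have hdig := baseDigit_lt hK c j
  have hjd : j * (K + 1) + (K + 1) ≤ d * (K + 1) := by nlinarith
  simp only [cellBlock, Finset.mem_insert, Finset.mem_singleton] at hi
  rcases hi with rfl | rfl
  · exact ⟨mul_add_div_of_lt (by omega), by omega⟩
  · exact ⟨by rw [add_assoc]; exact mul_add_div_of_lt (by omega), by omega⟩

lemma sum_cellInputs {M : Type*} [AddCommMonoid M] (hK : 0 < K) (c : ℕ) (G : ℕ → M) :
    ∑ i ∈ cellInputs d K c, G i = G (d * (K + 1)) + ∑ j ∈ range d,
      (G (j * (K + 1) + baseDigit K c j) + G (j * (K + 1) + baseDigit K c j + 1)) := by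
  rw [cellInputs, Finset.sum_insert, Finset.sum_biUnion]
  · congr 1
    refine Finset.sum_congr rfl fun j _ => Finset.sum_pair (by omega)
  · intro j hj j' hj' hne
    refine Finset.disjoint_left.2 fun i hi hi' => hne ?_
    rw [← (div_eq_and_lt_of_mem_cellBlock hK (Finset.mem_range.1 hj) hi).1,
      (div_eq_and_lt_of_mem_cellBlock hK (Finset.mem_range.1 hj') hi').1]
  · simp only [Finset.mem_biUnion, Finset.mem_range, not_exists, not_and]
    exact fun j hj hi => (div_eq_and_lt_of_mem_cellBlock hK hj hi).2.false

lemma card_cellInputs_le (c : ℕ) : (cellInputs d K c).card ≤ 2 * d + 1 := by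
  calc (cellInputs d K c).card ≤ ∑ _j ∈ range d, 2 + 1 := by
        refine (Finset.card_insert_le _ _).trans (Nat.add_le_add_right ?_ 1)
        exact Finset.card_biUnion_le.trans (Finset.sum_le_sum fun j _ => Finset.card_le_two)
    _ = 2 * d + 1 := by simp [mul_comm]

def gridArch (d K : ℕ) (hK : 0 < K) : Arch d where
  L := 3
  width := gridWidth d K
  input_eq := rfl
  output_eq := rfl
  idx := gridIdx d K
  idx_sub := by
    rintro (_ | _ | _ | l) i n hn <;> simp only [gridIdx] at hn <;>
      simp only [gridWidth, Finset.mem_range]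
    · split_ifs at hn with hi
      · simp only [Finset.mem_insert, Finset.mem_singleton] at hn
        rcases hn with rfl | rfl
        · exact Nat.lt_succ_of_lt (Nat.div_lt_of_lt_mul (by rwa [mul_comm]))
        · omega
      · simp at hn
    · rw [cellInputs, Finset.mem_insert, Finset.mem_biUnion] at hn
      rcases hn with rfl | ⟨j, hj, hn⟩
      · omega
      · exact Nat.lt_succ_of_lt (div_eq_and_lt_of_mem_cellBlock hK (Finset.mem_range.1 hj) hn).2
    · exact Nat.lt_succ_of_lt (Finset.mem_range.1 hn)
    · simp at hn

lemma gridArch_nParams_le (hK : 0 < K) : (gridArch d K hK).nParams ≤ (6 * d + 2) * K ^ d := by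
  have h₁ : ∑ i ∈ range (d * (K + 1)), (gridIdx d K 1 i).card ≤ d * (K + 1) * 2 := by
    refine (Finset.sum_le_sum fun i hi => ?_).trans
      (by rw [Finset.sum_const, Finset.card_range, smul_eq_mul])
    rw [gridIdx, if_pos (Finset.mem_range.1 hi)]
    exact Finset.card_le_two
  have h₂ : ∑ c ∈ range (K ^ d), (gridIdx d K 2 c).card ≤ K ^ d * (2 * d + 1) :=
    (Finset.sum_le_sum fun c _ => card_cellInputs_le c).trans
      (by rw [Finset.sum_const, Finset.card_range, smul_eq_mul])
  have h₃ : (gridIdx d K 3 0).card = K ^ d := Finset.card_range _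
  have hKd : d * (K + 1) ≤ d * (2 * K ^ d) := by
    rcases Nat.eq_zero_or_pos d with rfl | hd
    · simp
    · exact Nat.mul_le_mul_left _ (by linarith [Nat.le_self_pow hd.ne' K])
  simp only [Arch.nParams, gridArch, gridWidth, Finset.sum_range_succ, Finset.sum_range_zero,
    zero_add]
  nlinarith

/-- Layer-2 weights: `+1` on unit `(j, c_j)`, `-1` on unit `(j, c_j + 1)` and bias `-d`, so that
unit `c` sees `∑ⱼ 1[c_j/K ≤ x_j < (c_j+1)/K] - d`. -/
def cellWeight (d K c i : ℕ) : ℤ :=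
  if i = d * (K + 1) then -d
  else if i % (K + 1) = baseDigit K c (i / (K + 1)) then 1
  else if i % (K + 1) = baseDigit K c (i / (K + 1)) + 1 then -1
  else 0

lemma cellWeight_low (hK : 0 < K) {c j : ℕ} (hj : j < d) :
    cellWeight d K c (j * (K + 1) + baseDigit K c j) = 1 := by
  obtain ⟨hdiv, hlt⟩ :=
    div_eq_and_lt_of_mem_cellBlock hK (c := c) hj (Finset.mem_insert_self _ _)
  rw [cellWeight, if_neg hlt.ne, hdiv, if_pos (Nat.mul_add_mod_of_lt (by
    have := baseDigit_lt hK c j; omega))]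

lemma cellWeight_high (hK : 0 < K) {c j : ℕ} (hj : j < d) :
    cellWeight d K c (j * (K + 1) + baseDigit K c j + 1) = -1 := by
  obtain ⟨hdiv, hlt⟩ := div_eq_and_lt_of_mem_cellBlock hK (c := c) hj
    (Finset.mem_insert_of_mem (Finset.mem_singleton_self _))
  have hmod : (j * (K + 1) + baseDigit K c j + 1) % (K + 1) = baseDigit K c j + 1 := by
    rw [add_assoc]; exact Nat.mul_add_mod_of_lt (by have := baseDigit_lt hK c j; omega)
  rw [cellWeight, if_neg hlt.ne, hdiv, hmod, if_neg (by omega), if_pos rfl]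

def gridParams (d K : ℕ) (t v : ℕ → ℝ) : ℕ → ℕ → ℕ → ℝ
  | 1, i, j => if j = d then -t (i % (K + 1)) else 1
  | 2, c, i => cellWeight d K c i
  | 3, _, c => v c
  | _, _, _ => 0

lemma gridParams_mem {p : ℕ} (hd : d ≤ 2 ^ p) {t v : ℕ → ℝ} (ht : ∀ k, t k ∈ Fp p)
    (hv : ∀ c, v c ∈ Fp p) : ∀ l i j, gridParams d K t v l i j ∈ Fp p
  | 1, i, j => by
    show (if j = d then -t (i % (K + 1)) else 1) ∈ Fp p
    split_ifs
    exacts [Fp.neg_mem (ht _), Fp.one_mem]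
  | 2, c, i => by
    refine Fp.intCast_mem (z := cellWeight d K c i) ?_
    have : (d : ℤ) ≤ 2 ^ (p + 1) := by rw [pow_succ]; exact_mod_cast hd.trans (by omega)
    unfold cellWeight
    split_ifs <;> simp <;> linarith [one_le_pow₀ (M₀ := ℤ) (n := p + 1) one_le_two]
  | 3, _, c => hv c
  | 0, _, _ | _ + 4, _, _ => Fp.zero_mem

end GridNetwork

section GridNetworkEval

variable {d K p : ℕ} {rnd : ℝ → ℝ} {t v x : ℕ → ℝ}

lemma postAct_gridArch_one (h : IsNearestRounding p rnd) (hK : 0 < K) {i : ℕ}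
    (hi : i < d * (K + 1)) (hx : x (i / (K + 1)) ∈ Fp p) (ht : t (i % (K + 1)) ∈ Fp p) :
    postAct (gridArch d K hK) stepAct rnd (gridParams d K t v) x 1 i =
      stepAct (x (i / (K + 1)) - t (i % (K + 1))) := by
  have hj : i / (K + 1) < d := Nat.div_lt_of_lt_mul (by rwa [mul_comm])
  have hsort : ({i / (K + 1), d} : Finset ℕ).sort (· ≤ ·) = [i / (K + 1), d] := by
    rw [Finset.sort_insert _ (by simpa using hj.le) (by simpa using hj.ne), Finset.sort_singleton]
  have hw₁ : gridParams d K t v 1 i (i / (K + 1)) = 1 := if_neg hj.ne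
  have hw₂ : gridParams d K t v 1 i d = -t (i % (K + 1)) := if_pos rfl
  have hv₁ : postAct (gridArch d K hK) stepAct rnd (gridParams d K t v) x 0 (i / (K + 1)) =
      x (i / (K + 1)) := if_neg hj.ne
  have hv₂ : postAct (gridArch d K hK) stepAct rnd (gridParams d K t v) x 0 d = 1 := if_pos rfl
  show (if i = d * (K + 1) then 1 else rnd (stepAct (fpAff rnd (gridParams d K t v 1 i)
    (postAct (gridArch d K hK) stepAct rnd (gridParams d K t v) x 0)
    ((gridIdx d K 1 i).sort (· ≤ ·))))) = _
  rw [if_neg hi.ne, h.apply_stepAct, gridIdx, if_pos hi, hsort]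
  simp only [fpAff, List.foldl_cons, List.foldl_nil]
  rw [hw₁, hw₂, hv₁, hv₂, one_mul, mul_one, zero_add, h.apply_eq_self hx,
    h.apply_eq_self hx, h.apply_eq_self (Fp.neg_mem ht), h.stepAct_apply, sub_eq_add_neg]

/-- The integer summands of layer-2 unit `c` when layer-1 unit `i < d * (K + 1)` outputs `b i`. -/
def cellSummand (d K c : ℕ) (b : ℕ → ℤ) (i : ℕ) : ℤ :=
  cellWeight d K c i * if i = d * (K + 1) then 1 else b i

lemma sum_cellInputs_cellSummand (hK : 0 < K) (c : ℕ) (b : ℕ → ℤ) (G : ℤ → ℤ) :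
    ∑ i ∈ cellInputs d K c, G (cellSummand d K c b i) = G (-d) + ∑ j ∈ range d,
      (G (b (j * (K + 1) + baseDigit K c j)) + G (-b (j * (K + 1) + baseDigit K c j + 1))) := by
  rw [sum_cellInputs hK]
  congr 1
  · simp [cellSummand, cellWeight]
  · refine Finset.sum_congr rfl fun j hj => ?_
    have hj := Finset.mem_range.1 hj
    simp only [cellSummand, cellWeight_low hK hj, cellWeight_high hK hj, one_mul, neg_one_mul,
      if_neg (div_eq_and_lt_of_mem_cellBlock hK (c := c) hj (Finset.mem_insert_self _ _)).2.ne,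
      if_neg (div_eq_and_lt_of_mem_cellBlock hK (c := c) hj
        (Finset.mem_insert_of_mem (Finset.mem_singleton_self _))).2.ne]

lemma sum_posPart_cellSummand_le (hK : 0 < K) (c : ℕ) {b : ℕ → ℤ} (hb₀ : ∀ i, 0 ≤ b i)
    (hb₁ : ∀ i, b i ≤ 1) : ∑ i ∈ cellInputs d K c, (cellSummand d K c b i)⁺ ≤ d := by
  rw [sum_cellInputs_cellSummand hK c b (·⁺), posPart_eq_zero.2 (by simp), zero_add]
  calc _ ≤ ∑ _j ∈ range d, (1 : ℤ) := Finset.sum_le_sum fun j _ => by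
        rw [posPart_eq_self.2 (hb₀ _), posPart_eq_zero.2 (neg_nonpos.2 (hb₀ _)), add_zero]
        exact hb₁ _
    _ = d := by simp

lemma sum_negPart_cellSummand_le (hK : 0 < K) (c : ℕ) {b : ℕ → ℤ} (hb₀ : ∀ i, 0 ≤ b i)
    (hb₁ : ∀ i, b i ≤ 1) :
    ∑ i ∈ cellInputs d K c, (cellSummand d K c b i)⁻ ≤ 2 * d := by
  rw [sum_cellInputs_cellSummand hK c b (·⁻), negPart_eq_neg.2 (by simp), neg_neg]
  calc _ ≤ (d : ℤ) + ∑ _j ∈ range d, (1 : ℤ) := by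
        gcongr with j
        rw [negPart_eq_zero.2 (hb₀ _), negPart_eq_neg.2 (neg_nonpos.2 (hb₀ _)), neg_neg,
          zero_add]
        exact hb₁ _
    _ = 2 * d := by simp; ring

lemma postAct_gridArch_two (h : IsNearestRounding p rnd) (hK : 0 < K) (hd : d ≤ 2 ^ p)
    {b : ℕ → ℤ} (hb : ∀ i < d * (K + 1),
      postAct (gridArch d K hK) stepAct rnd (gridParams d K t v) x 1 i = b i)
    (hb₀ : ∀ i, 0 ≤ b i) (hb₁ : ∀ i, b i ≤ 1) {c : ℕ} (hc : c < K ^ d) :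
    postAct (gridArch d K hK) stepAct rnd (gridParams d K t v) x 2 c =
      stepAct (((∑ j ∈ range d, (b (j * (K + 1) + baseDigit K c j) -
        b (j * (K + 1) + baseDigit K c j + 1)) - d : ℤ) : ℝ)) := by
  have hg : ∀ i ∈ cellInputs d K c, gridParams d K t v 2 c i *
      postAct (gridArch d K hK) stepAct rnd (gridParams d K t v) x 1 i = cellSummand d K c b i := by
    intro i hi
    show (cellWeight d K c i : ℝ) * _ = _
    rw [cellSummand, Int.cast_mul]
    split_ifs with hib
    · rw [hib, Int.cast_one]
      exact congrArg _ (if_pos rfl)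
    · rw [cellInputs, Finset.mem_insert, Finset.mem_biUnion] at hi
      obtain hi | ⟨j, hj, hi⟩ := hi
      · exact absurd hi hib
      · rw [hb i (div_eq_and_lt_of_mem_cellBlock hK (Finset.mem_range.1 hj) hi).2]
  have h2d : 2 * (d : ℤ) ≤ 2 ^ (p + 1) := by
    rw [pow_succ, mul_comm]; exact_mod_cast Nat.mul_le_mul_right 2 hd
  have hsum := sum_cellInputs_cellSummand (d := d) hK c b id
  simp only [id, ← sub_eq_add_neg, neg_add_eq_sub] at hsum
  show (if c = K ^ d then 1 else rnd (stepAct (fpAff rnd (gridParams d K t v 2 c)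
    (postAct (gridArch d K hK) stepAct rnd (gridParams d K t v) x 1)
    ((cellInputs d K c).sort (· ≤ ·))))) = _
  rw [if_neg hc.ne, h.apply_stepAct, h.fpAff_sort_eq_intCast_sum hg
    ((sum_posPart_cellSummand_le hK c hb₀ hb₁).trans (by linarith))
    ((sum_negPart_cellSummand_le hK c hb₀ hb₁).trans h2d), hsum]

lemma evalNet_gridArch (h : IsNearestRounding p rnd) (hK : 0 < K) {xt : ℕ → ℝ} {c₀ : ℕ}
    (hc₀ : c₀ < K ^ d)
    (h₂ : ∀ c < K ^ d, postAct (gridArch d K hK) stepAct rnd (gridParams d K t v) xt 2 c =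
      if c = c₀ then 1 else 0)
    (hv : v c₀ ∈ Fp p) :
    evalNet (gridArch d K hK) stepAct rnd (gridParams d K t v) xt = v c₀ := by
  have := h.fpAff_sort_eq_of_single (w := v)
    (v := postAct (gridArch d K hK) stepAct rnd (gridParams d K t v) xt 2)
    (Finset.mem_range.2 hc₀) (fun c hc hne => by rw [h₂ c (Finset.mem_range.1 hc), if_neg hne,
      mul_zero]) (by rwa [h₂ c₀ hc₀, if_pos rfl, mul_one])
  rwa [h₂ c₀ hc₀, if_pos rfl, mul_one] at this

lemma stepAct_card_filter_range_sub (d : ℕ) (P : ℕ → Prop) [DecidablePred P] :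
    stepAct (((#{j ∈ range d | P j} - d : ℤ)) : ℝ) = if ∀ j < d, P j then 1 else 0 := by
  have hle := (Finset.card_filter_le (range d) P).trans (Finset.card_range d).le
  have hall := Finset.card_filter_eq_iff (s := range d) (p := P)
  rw [Finset.card_range] at hall
  simp only [stepAct, Finset.mem_range] at hall ⊢
  refine if_congr ?_ rfl rfl
  rw [← hall]
  push_cast
  rw [sub_nonneg, Nat.cast_le]
  exact ⟨le_antisymm hle, Eq.ge⟩

lemma postAct_gridArch_two_eq_ite (h : IsNearestRounding p rnd) (hK : 0 < K) (hd : d ≤ 2 ^ p)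
    {x : Fin d → ℝ} (hx : x ∈ Set.Icc 0 1) (hxF : ∀ j, x j ∈ Fp p) {xt : ℕ → ℝ}
    (hxt : ∀ j : Fin d, xt j = x j) {c : ℕ} (hc : c < K ^ d) :
    postAct (gridArch d K hK) stepAct rnd (gridParams d K (threshold p K) v) xt 2 c =
      if c = cellIndex K x then 1 else 0 := by
  have hxt' : ∀ j < d, xt j ∈ Fp p ∧ xt j ∈ Set.Icc 0 1 := fun j hj =>
    hxt ⟨j, hj⟩ ▸ ⟨hxF _, hx.1 _, hx.2 _⟩
  set b : ℕ → ℤ := fun i => if threshold p K (i % (K + 1)) ≤ xt (i / (K + 1)) then 1 else 0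
  have hb : ∀ i < d * (K + 1), postAct (gridArch d K hK) stepAct rnd
      (gridParams d K (threshold p K) v) xt 1 i = b i := fun i hi => by
    rw [postAct_gridArch_one h hK hi (hxt' _ (Nat.div_lt_of_lt_mul (by rwa [mul_comm]))).1
      (threshold_mem _ _ _)]
    simp only [stepAct, b, sub_nonneg]
    split_ifs <;> simp
  have hterm : ∀ j < d, b (j * (K + 1) + baseDigit K c j) - b (j * (K + 1) + baseDigit K c j + 1)
      = if baseDigit K c j = gridIndex K (xt j) then 1 else 0 := by
    intro j hj
    have hdig := baseDigit_lt hK c j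
    obtain ⟨hxF, hx₀, hx₁⟩ := hxt' j hj
    simp only [b, Nat.mul_add_mod_of_lt (show baseDigit K c j < K + 1 by omega),
      mul_add_div_of_lt (show baseDigit K c j < K + 1 by omega), add_assoc,
      Nat.mul_add_mod_of_lt (show baseDigit K c j + 1 < K + 1 by omega),
      mul_add_div_of_lt (show baseDigit K c j + 1 < K + 1 by omega)]
    exact ite_threshold_le_sub_ite_threshold_le hdig hxF hx₀ hx₁
  rw [postAct_gridArch_two h hK hd hb (fun i => by simp only [b]; split_ifs <;> simp)
    (fun i => by simp only [b]; split_ifs <;> simp) hc, Finset.sum_congr rfl fun j hj =>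
    hterm j (Finset.mem_range.1 hj), Finset.sum_boole]
  rw [stepAct_card_filter_range_sub]
  refine if_congr ?_ rfl rfl
  rw [cellIndex, eq_sum_iff_baseDigit_eq hc _ fun j => gridIndex_lt hK _]
  simp only [Fin.forall_iff, ← hxt]

end GridNetworkEval

/-- Universal approximation by Step networks under `F_p`: for continuous
`f* : [0,1]^d → ℝ` and `ε > 0`, with `K = min{k ∈ ℕ : 1/ω_{f*}⁻¹(ε) ≤ k}`,
there is a 3-layer Step network over `F_p` with at most `(6d+2)·K^d`
parameters satisfying `|f(x) - f*(x)| ≤ |f*(x) - ⟦f*(x)⟧| + ε` for all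
`x ∈ [0,1]^d ∩ F_p^d`. -/
theorem universal_approx_step_Fp (p d : ℕ) (hd : d ≤ 2 ^ p)
    (f : (Fin d → ℝ) → ℝ) (hf : ContinuousOn f (Set.Icc 0 1))
    (ε : ℝ) (hε : 0 < ε) (K : ℕ)
    (hK : IsLeast {k : ℕ | 1 ≤ k ∧ 1 / invMod d f ε ≤ (k : ℝ)} K)
    (rnd : ℝ → ℝ) (hrnd : ∀ r, RoundsTo p r (rnd r)) :
    ∃ (A : Arch d) (θ : ℕ → ℕ → ℕ → ℝ), A.L = 3 ∧
      A.nParams ≤ (6 * d + 2) * K ^ d ∧ (∀ l i j, θ l i j ∈ Fp p) ∧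
      ∀ x : Fin d → ℝ, x ∈ Set.Icc 0 1 → (∀ j, x j ∈ Fp p) →
        |evalNet A stepAct rnd θ (fun j => if h : j < d then x ⟨j, h⟩ else 0)
            - f x| ≤ |f x - rnd (f x)| + ε := by
  obtain ⟨⟨hK₀, hKε⟩, -⟩ := hK
  have hnear : IsNearestRounding p rnd := fun r => (hrnd r).2.1
  have hmem : ∀ r, rnd r ∈ Fp p := fun r => (hrnd r).1
  set v : ℕ → ℝ := fun c => rnd ((sInf (f '' gridCell K c) + sSup (f '' gridCell K c)) / 2)
  refine ⟨gridArch d K hK₀, gridParams d K (threshold p K) v, rfl, gridArch_nParams_le hK₀,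
    gridParams_mem hd (threshold_mem p K) fun c => hmem _, fun x hx hxF => ?_⟩
  rw [evalNet_gridArch hnear hK₀ (cellIndex_lt hK₀ x)
    (fun c hc => postAct_gridArch_two_eq_ite hnear hK₀ hd hx hxF (fun j => dif_pos j.2) hc)
    (hmem _)]
  refine hnear.abs_apply_sub_le hmem
    (abs_midpoint_sub_le ?_ ⟨x, mem_gridCell_cellIndex hK₀ hx, rfl⟩)
  rintro _ ⟨y, hy, rfl⟩ _ ⟨z, hz, rfl⟩
  exact (le_abs_self _).trans (abs_sub_le_of_mem_gridCell hf hε hK₀ hKε hy hz)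
end
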